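/- arXiv:1605.05744 — 2 statements merged into one kernel-verified Lean document; each statement's English description precedes it below -/
import Mathlib

section
/- Let n ≥ 2 and u ∈ ℂ, and set w_{(n)} = s_1 s_2 ⋯ s_{n−1} ∈ S_n ⊆ ℌ_A. For every subset I ⊆ {1,…,n} with |I| even, there exists ε ∈ {1, −1} such that w_{(n)} c_I − ε w_{(n)} ∈ [ℌ_A, ℌ_A]. -/
open scoped BigOperators

namespace DAHCA

/-- Generators of the degenerate affine Hecke-Clifford algebra of type `A_{n-1}`. -/
inductive Gen (n : ℕ) : Type
  | x : Fin n → Gen n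
  | c : Fin n → Gen n
  | w : Equiv.Perm (Fin n) → Gen n

noncomputable def X (n : ℕ) (i : Fin n) : FreeAlgebra ℂ (Gen n) := FreeAlgebra.ι ℂ (Gen.x i)
noncomputable def C (n : ℕ) (i : Fin n) : FreeAlgebra ℂ (Gen n) := FreeAlgebra.ι ℂ (Gen.c i)
noncomputable def W (n : ℕ) (σ : Equiv.Perm (Fin n)) : FreeAlgebra ℂ (Gen n) :=
  FreeAlgebra.ι ℂ (Gen.w σ)

/-- The simple transposition `s_{i+1} = (i, i+1)` (0-indexed). -/
def sA (n : ℕ) (i : ℕ) (h : i + 1 < n) : Equiv.Perm (Fin n) :=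
  Equiv.swap ⟨i, Nat.lt_of_succ_lt h⟩ ⟨i + 1, h⟩

/-- The defining relations of the degenerate affine Hecke-Clifford algebra of type
`A_{n-1}` with parameter `u`. -/
inductive Rel (n : ℕ) (u : ℂ) : FreeAlgebra ℂ (Gen n) → FreeAlgebra ℂ (Gen n) → Prop
  | xx (i j : Fin n) : Rel n u (X n i * X n j) (X n j * X n i)
  | csq (i : Fin n) : Rel n u (C n i * C n i) 1
  | cc (i j : Fin n) (hij : i ≠ j) : Rel n u (C n i * C n j) (-(C n j * C n i))
  | ww (σ τ : Equiv.Perm (Fin n)) : Rel n u (W n σ * W n τ) (W n (σ * τ))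
  | wone : Rel n u (W n 1) 1
  | xc (i : Fin n) : Rel n u (X n i * C n i) (-(C n i * X n i))
  | xc' (i j : Fin n) (hij : i ≠ j) : Rel n u (X n i * C n j) (C n j * X n i)
  | wc (σ : Equiv.Perm (Fin n)) (i : Fin n) : Rel n u (W n σ * C n i) (C n (σ i) * W n σ)
  | cross (i : ℕ) (h : i + 1 < n) :
      Rel n u (X n ⟨i + 1, h⟩ * W n (sA n i h) - W n (sA n i h) * X n ⟨i, Nat.lt_of_succ_lt h⟩)
        (u • (1 - C n ⟨i + 1, h⟩ * C n ⟨i, Nat.lt_of_succ_lt h⟩))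
  | xw (i : ℕ) (h : i + 1 < n) (j : Fin n) (h1 : (j : ℕ) ≠ i) (h2 : (j : ℕ) ≠ i + 1) :
      Rel n u (X n j * W n (sA n i h)) (W n (sA n i h) * X n j)

/-- The degenerate affine Hecke-Clifford algebra of type `A_{n-1}` with parameter `u`. -/
abbrev HA (n : ℕ) (u : ℂ) := RingQuot (Rel n u)

noncomputable def xH (n : ℕ) (u : ℂ) (i : Fin n) : HA n u :=
  RingQuot.mkAlgHom ℂ (Rel n u) (X n i)
noncomputable def cH (n : ℕ) (u : ℂ) (i : Fin n) : HA n u :=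
  RingQuot.mkAlgHom ℂ (Rel n u) (C n i)
noncomputable def wH (n : ℕ) (u : ℂ) (σ : Equiv.Perm (Fin n)) : HA n u :=
  RingQuot.mkAlgHom ℂ (Rel n u) (W n σ)

/-- The linear span of all commutators in an algebra `A`; the cocenter is `A` modulo
this subspace. -/
def commSpan (A : Type*) [Ring A] [Algebra ℂ A] : Submodule ℂ A :=
  Submodule.span ℂ {z : A | ∃ a b : A, z = a * b - b * a}

/-- The ordered product `c_{i_1} c_{i_2} ⋯ c_{i_m}` over `I = {i_1 < i_2 < ⋯ < i_m}`. -/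
noncomputable def cProd (n : ℕ) (u : ℂ) (I : Finset (Fin n)) : HA n u :=
  ((I.sort (· ≤ ·)).map (cH n u)).prod

/-- The cycle `(a, a+1, …, b-1)` expressed as the product of the simple transpositions
`s_{a+1} s_{a+2} ⋯ s_{b-1}` (1-indexed), i.e. `(a,a+1)(a+1,a+2)⋯(b-2,b-1)` (0-indexed). -/
def wSeg (n : ℕ) (a b : ℕ) : Equiv.Perm (Fin n) :=
  ((List.range (b - a - 1)).map fun j =>
    if h : a + j + 1 < n then sA n (a + j) h else 1).prod

end DAHCA

/-! In the cocenter, conjugation by an involution `c_k` is invisible, while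
`c_k w = w c_{σ⁻¹ k}` and moving `c_k` through a Clifford product costs only a sign. Conjugating
`w c_k c_L` by `c_k` therefore replaces the first index `k` by `σ⁻¹ k`, up to sign. Since
`w_(n) = s_1 ⋯ s_{n-1}` is the full cycle `finRotate n`, iterating turns `c_i c_j` into
`c_j c_j = 1`, which shortens an even product by two. -/
namespace DAHCA

open Equiv

structure IsCliffordFamily {A ι : Type*} [Ring A] (c : ι → A) : Prop where
  mul_self : ∀ i, c i * c i = 1
  mul_comm_of_ne : ∀ i j, i ≠ j → c i * c j = -(c j * c i)

namespace IsCliffordFamily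

variable {A ι : Type*} [Ring A] {c : ι → A}

theorem mul_comm_sign (hc : IsCliffordFamily c) (i j : ι) :
    ∃ ε : ℤˣ, c i * c j = ε • (c j * c i) := by
  by_cases hij : i = j
  · exact ⟨1, by rw [hij, one_smul]⟩
  · exact ⟨-1, by rw [hc.mul_comm_of_ne i j hij, Units.neg_smul, one_smul]⟩

theorem mul_prod_comm_sign (hc : IsCliffordFamily c) (i : ι) (L : List ι) :
    ∃ ε : ℤˣ, c i * (L.map c).prod = ε • ((L.map c).prod * c i) := by
  induction L with
  | nil => exact ⟨1, by simp⟩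
  | cons j L ih =>
    obtain ⟨ε, hε⟩ := ih
    obtain ⟨δ, hδ⟩ := hc.mul_comm_sign i j
    refine ⟨δ * ε, ?_⟩
    simp only [List.map_cons, List.prod_cons]
    rw [← mul_assoc, hδ, smul_mul_assoc, mul_assoc, hε, mul_smul_comm, mul_smul, mul_assoc]

end IsCliffordFamily

section Cocenter

variable {A : Type*} [Ring A] [Algebra ℂ A]

local notation "tr" a => (Submodule.Quotient.mk a : A ⧸ commSpan A)

theorem mk_mul_comm (a b : A) : (tr (a * b)) = tr (b * a) :=
  (Submodule.Quotient.eq _).2 (Submodule.subset_span ⟨a, b, rfl⟩)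

theorem mk_conj_of_mul_self {e : A} (he : e * e = 1) (y : A) : (tr (e * y * e)) = tr y := by
  rw [mul_assoc, mk_mul_comm, mul_assoc, he, mul_one]

variable {ι : Type*} {c : ι → A} {w : A} {σ : Perm ι}

theorem exists_mk_mul_prod_cons_apply (hc : IsCliffordFamily c)
    (hw : ∀ i, w * c i = c (σ i) * w) (i : ι) (M : List ι) :
    ∃ ε : ℤˣ,
      (tr (w * ((σ i :: M).map c).prod)) = ε • tr (w * ((i :: M).map c).prod) := by
  obtain ⟨ε, hε⟩ := hc.mul_prod_comm_sign (σ i) M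
  refine ⟨ε, ?_⟩
  simp only [List.map_cons, List.prod_cons]
  rw [← mk_conj_of_mul_self (hc.mul_self (σ i)), ← Submodule.Quotient.mk_smul]
  congr 1
  calc c (σ i) * (w * (c (σ i) * (M.map c).prod)) * c (σ i)
      = w * c i * (c (σ i) * (M.map c).prod) * c (σ i) := by rw [hw, ← mul_assoc, mul_assoc _ w]
    _ = ε • (w * c i * (M.map c).prod * (c (σ i) * c (σ i))) := by
        rw [hε, mul_smul_comm, smul_mul_assoc]; simp only [mul_assoc]
    _ = ε • (w * (c i * (M.map c).prod)) := by rw [hc.mul_self, mul_one, mul_assoc]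

theorem exists_mk_mul_prod_cons_pow_apply (hc : IsCliffordFamily c)
    (hw : ∀ i, w * c i = c (σ i) * w) (m : ℕ) (i : ι) (M : List ι) :
    ∃ ε : ℤˣ,
      (tr (w * (((σ ^ m) i :: M).map c).prod)) = ε • tr (w * ((i :: M).map c).prod) := by
  induction m with
  | zero => exact ⟨1, by rw [pow_zero, Perm.one_apply, one_smul]⟩
  | succ m ih =>
    obtain ⟨ε, hε⟩ := ih
    obtain ⟨δ, hδ⟩ := exists_mk_mul_prod_cons_apply hc hw ((σ ^ m) i) M
    exact ⟨δ * ε, by rw [pow_succ', Perm.mul_apply, hδ, hε, mul_smul]⟩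

theorem exists_mk_mul_prod_eq_smul_mk (hc : IsCliffordFamily c) (hw : ∀ i, w * c i = c (σ i) * w)
    (hσ : ∀ i j, ∃ m : ℕ, (σ ^ m) i = j) :
    ∀ L : List ι, Even L.length → ∃ ε : ℤˣ, (tr (w * (L.map c).prod)) = ε • tr w
  | [], _ => ⟨1, by rw [List.map_nil, List.prod_nil, mul_one, one_smul]⟩
  | [_], hL => absurd hL (by simp)
  | i :: j :: M, hL => by
    obtain ⟨m, hm⟩ := hσ j i
    obtain ⟨δ, hδ⟩ := exists_mk_mul_prod_cons_pow_apply hc hw m j (j :: M)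
    obtain ⟨ε, hε⟩ := exists_mk_mul_prod_eq_smul_mk hc hw hσ M
      (by simpa [Nat.even_add_one, parity_simps] using hL)
    refine ⟨δ * ε, ?_⟩
    rw [hm] at hδ
    rw [hδ, List.map_cons, List.map_cons, List.prod_cons, List.prod_cons, ← mul_assoc (c j),
      hc.mul_self, one_mul, hε, mul_smul]

end Cocenter

theorem cycleRange_succ_eq_mul_sA {n m : ℕ} (h : m + 1 < n) :
    Fin.cycleRange (⟨m + 1, h⟩ : Fin n) = Fin.cycleRange ⟨m, by omega⟩ * sA n m h := by
  obtain ⟨k, rfl⟩ : ∃ k, n = k + 1 := ⟨n - 1, by omega⟩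
  ext x
  simp only [Perm.mul_apply, sA, swap_apply_def, Fin.cycleRange_apply]
  split_ifs <;> simp_all [Fin.ext_iff, Fin.lt_def, Fin.val_add_one] <;> omega

theorem prod_sA_eq_cycleRange {n : ℕ} :
    ∀ (m : ℕ) (hm : m < n),
      ((List.range m).map fun j => if h : j + 1 < n then sA n j h else 1).prod =
        Fin.cycleRange ⟨m, hm⟩
  | 0, _ => by simp
  | m + 1, hm => by
    rw [List.range_succ, List.map_append, List.prod_append, prod_sA_eq_cycleRange m (by omega),
      cycleRange_succ_eq_mul_sA hm, List.map_singleton, List.prod_singleton, dif_pos hm]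

theorem wSeg_zero_self (n : ℕ) : wSeg n 0 n = finRotate n := by
  cases n with
  | zero => exact Subsingleton.elim _ _
  | succ k =>
    simp only [wSeg, Nat.sub_zero, Nat.add_sub_cancel, zero_add]
    rw [prod_sA_eq_cycleRange k (by omega), ← Fin.cycleRange_last]
    rfl

theorem exists_pow_finRotate_apply_eq {n : ℕ} (hn : 2 ≤ n) (i j : Fin n) :
    ∃ m : ℕ, (finRotate n ^ m) i = j := by
  have hmoved (k : Fin n) : finRotate n k ≠ k := by
    rw [← Perm.mem_support, support_finRotate_of_le hn]
    exact Finset.mem_univ k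
  exact (isCycle_finRotate_of_le hn).exists_pow_eq (hmoved i) (hmoved j)

section Relations

variable {n : ℕ} {u : ℂ}

theorem isCliffordFamily_cH : IsCliffordFamily (cH n u) where
  mul_self i := by simpa [cH] using RingQuot.mkAlgHom_rel ℂ (Rel.csq (u := u) i)
  mul_comm_of_ne i j hij := by simpa [cH] using RingQuot.mkAlgHom_rel ℂ (Rel.cc (u := u) i j hij)

theorem wH_mul_cH (σ : Perm (Fin n)) (i : Fin n) :
    wH n u σ * cH n u i = cH n u (σ i) * wH n u σ := by
  simpa [cH, wH] using RingQuot.mkAlgHom_rel ℂ (Rel.wc (u := u) σ i)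

end Relations

/-- With `w_{(n)} = s_1 s_2 ⋯ s_{n-1}`, for every subset
`I ⊆ {1, …, n}` of even cardinality there is a sign `ε` such that
`w_{(n)} c_I ≡ ε w_{(n)}` modulo commutators. -/
theorem wCirc_cliffordProd_reduction (n : ℕ) (hn : 2 ≤ n) (u : ℂ)
    (I : Finset (Fin n)) (hI : Even I.card) :
    ∃ ε : ℂ, (ε = 1 ∨ ε = -1) ∧
      wH n u (wSeg n 0 n) * cProd n u I - ε • wH n u (wSeg n 0 n) ∈ commSpan (HA n u) := by
  have hσ : ∀ i j, ∃ m : ℕ, (wSeg n 0 n ^ m) i = j := by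
    rw [wSeg_zero_self]
    exact exists_pow_finRotate_apply_eq hn
  obtain ⟨ε, hε⟩ := exists_mk_mul_prod_eq_smul_mk isCliffordFamily_cH (wH_mul_cH _) hσ
    (I.sort (· ≤ ·)) (by rwa [Finset.length_sort])
  refine ⟨((ε : ℤ) : ℂ), ?_, ?_⟩
  · rcases Int.units_eq_one_or ε with rfl | rfl <;> simp
  · rw [← Submodule.Quotient.eq, Submodule.Quotient.mk_smul, Int.cast_smul_eq_zsmul]
    exact hε

end DAHCA
end

section
/- Let n ≥ 2 and let ℌ⁰_A be the degenerate affine Hecke-Clifford algebra of type A_{n−1} with parameter u = 0. Fix a conjugacy class C of S_n, let J be a subset of the simple transpositions of minimal cardinality with C ∩ W_J ≠ ∅, and let w_C ∈ C ∩ W_J (such an element is elliptic in W_J). Then for every f ∈ ℂ[x_1²,…,x_n²] there exists g ∈ S((V²)^{W_J})^{N_{S_n}(W_J)} such that w_C f − w_C g ∈ [ℌ⁰_A, ℌ⁰_A]. -/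
open scoped BigOperators

namespace DAHCA

section RelLemmas

variable (n : ℕ) (u : ℂ)

lemma rel_xx (i j : Fin n) : xH n u i * xH n u j = xH n u j * xH n u i := by
  simpa [xH, map_mul] using RingQuot.mkAlgHom_rel ℂ (Rel.xx (n := n) (u := u) i j)

lemma rel_csq (i : Fin n) : cH n u i * cH n u i = 1 := by
  simpa [cH, map_mul] using RingQuot.mkAlgHom_rel ℂ (Rel.csq (n := n) (u := u) i)

lemma rel_cc (i j : Fin n) (hij : i ≠ j) : cH n u i * cH n u j = -(cH n u j * cH n u i) := by
  simpa [cH, map_mul, map_neg] using RingQuot.mkAlgHom_rel ℂ (Rel.cc (n := n) (u := u) i j hij)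

lemma rel_xc (i : Fin n) : xH n u i * cH n u i = -(cH n u i * xH n u i) := by
  simpa [xH, cH, map_mul, map_neg] using RingQuot.mkAlgHom_rel ℂ (Rel.xc (n := n) (u := u) i)

lemma rel_xc' (i j : Fin n) (hij : i ≠ j) : xH n u i * cH n u j = cH n u j * xH n u i := by
  simpa [xH, cH, map_mul] using RingQuot.mkAlgHom_rel ℂ (Rel.xc' (n := n) (u := u) i j hij)

lemma rel_ww (σ τ : Equiv.Perm (Fin n)) : wH n u σ * wH n u τ = wH n u (σ * τ) := by
  simpa [wH, map_mul] using RingQuot.mkAlgHom_rel ℂ (Rel.ww (n := n) (u := u) σ τ)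

lemma rel_wc (σ : Equiv.Perm (Fin n)) (i : Fin n) :
    wH n u σ * cH n u i = cH n u (σ i) * wH n u σ := by
  simpa [wH, cH, map_mul] using RingQuot.mkAlgHom_rel ℂ (Rel.wc (n := n) (u := u) σ i)

lemma rel_cross (i : ℕ) (h : i + 1 < n) :
    xH n u ⟨i + 1, h⟩ * wH n u (sA n i h) - wH n u (sA n i h) * xH n u ⟨i, Nat.lt_of_succ_lt h⟩
      = u • (1 - cH n u ⟨i + 1, h⟩ * cH n u ⟨i, Nat.lt_of_succ_lt h⟩) := by
  simpa [xH, cH, wH, map_mul, map_sub, map_one, map_smul] using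
    RingQuot.mkAlgHom_rel ℂ (Rel.cross (n := n) (u := u) i h)

lemma rel_xw (i : ℕ) (h : i + 1 < n) (j : Fin n) (h1 : (j : ℕ) ≠ i) (h2 : (j : ℕ) ≠ i + 1) :
    xH n u j * wH n u (sA n i h) = wH n u (sA n i h) * xH n u j := by
  simpa [xH, wH, map_mul] using RingQuot.mkAlgHom_rel ℂ (Rel.xw (n := n) (u := u) i h j h1 h2)

end RelLemmas

/-- The parity automorphism of the superalgebra `HA n u`: it fixes the even generators
`x_i` and `w_σ` and negates the odd generators `c_i`. -/
noncomputable def theta (n : ℕ) (u : ℂ) : HA n u →ₐ[ℂ] HA n u :=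
  RingQuot.liftAlgHom ℂ ⟨FreeAlgebra.lift ℂ (fun g => match g with
      | Gen.x i => xH n u i
      | Gen.c i => -(cH n u i)
      | Gen.w σ => wH n u σ), by
    intro a b hab
    induction hab with
    | xx i j => simp [X, FreeAlgebra.lift_ι_apply, rel_xx]
    | csq i =>
        simp only [map_mul, map_one, C, FreeAlgebra.lift_ι_apply]
        calc -cH n u i * -cH n u i = cH n u i * cH n u i := neg_mul_neg (cH n u i) (cH n u i)
          _ = 1 := rel_csq n u i
    | cc i j hij =>
        simp only [map_mul, map_neg, C, FreeAlgebra.lift_ι_apply]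
        calc -cH n u i * -cH n u j = cH n u i * cH n u j := neg_mul_neg (cH n u i) (cH n u j)
          _ = -(cH n u j * cH n u i) := rel_cc n u i j hij
          _ = -(-cH n u j * -cH n u i) := neg_inj.mpr (neg_mul_neg (cH n u j) (cH n u i)).symm
    | ww σ τ => simp [W, FreeAlgebra.lift_ι_apply, rel_ww]
    | wone =>
        simpa [W, FreeAlgebra.lift_ι_apply, wH, map_one] using
          RingQuot.mkAlgHom_rel ℂ (Rel.wone (n := n) (u := u))
    | xc i =>
        simp only [map_mul, map_neg, X, C, FreeAlgebra.lift_ι_apply]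
        calc xH n u i * -cH n u i = -(xH n u i * cH n u i) := mul_neg (xH n u i) (cH n u i)
          _ = -(-(cH n u i * xH n u i)) := neg_inj.mpr (rel_xc n u i)
          _ = -(-cH n u i * xH n u i) := neg_inj.mpr (neg_mul (cH n u i) (xH n u i)).symm
    | xc' i j hij =>
        simp only [map_mul, map_neg, X, C, FreeAlgebra.lift_ι_apply]
        calc xH n u i * -cH n u j = -(xH n u i * cH n u j) := mul_neg (xH n u i) (cH n u j)
          _ = -(cH n u j * xH n u i) := neg_inj.mpr (rel_xc' n u i j hij)
          _ = -cH n u j * xH n u i := (neg_mul (cH n u j) (xH n u i)).symm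
    | wc σ i =>
        simp only [map_mul, map_neg, W, C, FreeAlgebra.lift_ι_apply]
        calc wH n u σ * -cH n u i = -(wH n u σ * cH n u i) := mul_neg (wH n u σ) (cH n u i)
          _ = -(cH n u (σ i) * wH n u σ) := neg_inj.mpr (rel_wc n u σ i)
          _ = -cH n u (σ i) * wH n u σ := (neg_mul (cH n u (σ i)) (wH n u σ)).symm
    | cross i h =>
        simp only [map_sub, map_mul, map_smul, map_one, map_neg, X, C, W,
          FreeAlgebra.lift_ι_apply]
        exact (rel_cross n u i h).trans
          (congrArg (fun t => u • ((1 : HA n u) - t))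
            (neg_mul_neg (cH n u ⟨i + 1, h⟩) (cH n u ⟨i, Nat.lt_of_succ_lt h⟩)).symm)
    | xw i h j h1 h2 => simp [X, W, FreeAlgebra.lift_ι_apply, rel_xw n u i h j h1 h2]⟩

/-- The even part of the superalgebra `HA n u`, i.e. the fixed subspace of the parity
automorphism. -/
noncomputable def evenPart (n : ℕ) (u : ℂ) : Submodule ℂ (HA n u) :=
  LinearMap.eqLocus (theta n u).toLinearMap LinearMap.id

/-- The even cocenter of `HA n u`: the image of the even part in the quotient of
`HA n u` by the span of all commutators. -/
noncomputable def evenCocenter (n : ℕ) (u : ℂ) :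
    Submodule ℂ (HA n u ⧸ commSpan (HA n u)) :=
  (evenPart n u).map (commSpan (HA n u)).mkQ

end DAHCA
namespace DAHCA

/-- The (commutative) subalgebra of `HA n u` generated by `x_1, …, x_n`. -/
noncomputable def Xalg (n : ℕ) (u : ℂ) : Subalgebra ℂ (HA n u) :=
  Algebra.adjoin ℂ (Set.range (xH n u))

noncomputable instance (n : ℕ) (u : ℂ) : CommRing (Xalg n u) :=
  { (Xalg n u).toRing with
    mul_comm := (Algebra.isMulCommutative_adjoin ℂ (by
      rintro a ⟨i, rfl⟩ b ⟨j, rfl⟩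
      exact rel_xx n u i j)).is_comm.comm }

noncomputable def xSub (n : ℕ) (u : ℂ) (i : Fin n) : Xalg n u :=
  ⟨xH n u i, Algebra.subset_adjoin ⟨i, rfl⟩⟩

/-- Evaluation of a polynomial at the commuting elements `x_1, …, x_n` of `HA n u`. -/
noncomputable def evP (n : ℕ) (u : ℂ) (p : MvPolynomial (Fin n) ℂ) : HA n u :=
  ((MvPolynomial.aeval (xSub n u) p : Xalg n u) : HA n u)

/-- The polynomials fixed by (the permutation action of) every element of `G`. -/
noncomputable def permFixed (n : ℕ) (G : Set (Equiv.Perm (Fin n))) :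
    Submodule ℂ (MvPolynomial (Fin n) ℂ) where
  carrier := {p | ∀ σ ∈ G, MvPolynomial.rename (⇑σ) p = p}
  add_mem' := fun ha hb σ hσ => by rw [map_add, ha σ hσ, hb σ hσ]
  zero_mem' := fun σ hσ => map_zero _
  smul_mem' := fun c p hp σ hσ => by
    rw [map_smul, hp σ hσ]

/-- `V²`: the span of the squares of the variables. -/
noncomputable def V2 (n : ℕ) : Submodule ℂ (MvPolynomial (Fin n) ℂ) :=
  Submodule.span ℂ (Set.range fun i : Fin n => (MvPolynomial.X i) ^ 2)

/-- `(V²)^{W_J}`, the `W_J`-fixed subspace of `V²`. -/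
noncomputable def V2J (n : ℕ) (J : Set (Equiv.Perm (Fin n))) : Submodule ℂ (MvPolynomial (Fin n) ℂ) :=
  V2 n ⊓ permFixed n (Subgroup.closure J : Subgroup (Equiv.Perm (Fin n)))

/-- `S((V²)^{W_J})`, the subalgebra generated by the `W_J`-fixed subspace of `V²`. -/
noncomputable def SV2J (n : ℕ) (J : Set (Equiv.Perm (Fin n))) :
    Subalgebra ℂ (MvPolynomial (Fin n) ℂ) :=
  Algebra.adjoin ℂ (V2J n J : Set (MvPolynomial (Fin n) ℂ))

/-- `S((V²)^{W_J})^{N_{S_n}(W_J)}`: the subspace of `S((V²)^{W_J})` consisting of elements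
fixed by the normalizer of `W_J` in `S_n`. -/
noncomputable def SInvJ (n : ℕ) (J : Set (Equiv.Perm (Fin n))) :
    Submodule ℂ (MvPolynomial (Fin n) ℂ) :=
  Subalgebra.toSubmodule (SV2J n J) ⊓
    permFixed n (Subgroup.normalizer ((Subgroup.closure J : Subgroup (Equiv.Perm (Fin n))) : Set (Equiv.Perm (Fin n))) : Subgroup (Equiv.Perm (Fin n)))

/-- The set of simple transpositions of `S_n`. -/
def simplesA (n : ℕ) : Set (Equiv.Perm (Fin n)) :=
  {σ | ∃ (i : ℕ) (h : i + 1 < n), σ = sA n i h}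

end DAHCA
namespace DAHCA


/-!
At `u = 0` the relations give `w x_j = x_{w j} w` for every `w ∈ S_n`, so
`w_C (x_j - x_{w_C j}) q` is a commutator and `w_C f` only depends, modulo commutators, on `f`
modulo the ideal spanned by the `x_j - x_{w_C j}`. There each `x_i²` can be replaced by the mean
of the `x_y²` over the `w_C`-cycle of `i`, so `f` may be taken to be a polynomial in the cycle
sums of squares.

Minimality of `J` forces the orbits of `W_J` to be exactly the cycles of `w_C` (a conjugate of
`w_C` with its cycles sorted into intervals lies in a parabolic subgroup with `n - #cycles`
generators), so the cycle sums of squares lie in `(V²)^{W_J}`. An element `σ` of the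
normalizer permutes these cycles; conjugating by `σ` and then by a cycle-preserving permutation
brings `σ w_C σ⁻¹` back to `w_C`, whence `w_C g ≡ w_C σ(g)`, and averaging over the
normalizer gives the invariant representative.
-/

open Equiv Finset MvPolynomial

section Commutators

variable {A : Type*} [Ring A] [Algebra ℂ A]

lemma mul_sub_mul_mem_commSpan (a b : A) : a * b - b * a ∈ commSpan A :=
  Submodule.subset_span ⟨a, b, rfl⟩

lemma sub_conj_mem_commSpan (a v v' : A) (h : v' * v = 1) : a - v * a * v' ∈ commSpan A := by
  have : a - v * a * v' = v' * (v * a) - v * a * v' := by rw [← mul_assoc, h, one_mul]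
  exact this ▸ mul_sub_mul_mem_commSpan _ _

end Commutators

section Intertwining

variable {n : ℕ} {u : ℂ}

lemma wH_one : wH n u 1 = 1 := by
  simpa [wH] using RingQuot.mkAlgHom_rel ℂ (Rel.wone (n := n) (u := u))

lemma wH_inv_mul (σ : Perm (Fin n)) : wH n u σ⁻¹ * wH n u σ = 1 := by
  rw [rel_ww, inv_mul_cancel, wH_one]

noncomputable def evPAlgHom (n : ℕ) (u : ℂ) : MvPolynomial (Fin n) ℂ →ₐ[ℂ] HA n u :=
  (Xalg n u).val.comp (aeval (xSub n u))

lemma evP_eq_evPAlgHom : evP n u = evPAlgHom n u := rfl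

@[simp]
lemma evPAlgHom_X (i : Fin n) : evPAlgHom n u (MvPolynomial.X i) = xH n u i := by
  simp [evPAlgHom, xSub]

lemma evPAlgHom_mul_comm (p q : MvPolynomial (Fin n) ℂ) :
    evPAlgHom n u p * evPAlgHom n u q = evPAlgHom n u q * evPAlgHom n u p := by
  rw [← map_mul, mul_comm, map_mul]

/-- At `u = 0` the cross relation reads `x_{i+1} s_i = s_i x_i`. -/
lemma wH_sA_mul_xH (i : ℕ) (h : i + 1 < n) (j : Fin n) :
    wH n 0 (sA n i h) * xH n 0 j = xH n 0 (sA n i h j) * wH n 0 (sA n i h) := by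
  set s := wH n 0 (sA n i h)
  have hcross : xH n 0 ⟨i + 1, h⟩ * s = s * xH n 0 ⟨i, by omega⟩ := by
    simpa [sub_eq_zero] using rel_cross n 0 i h
  have hss : s * s = 1 := by rw [rel_ww, sA, swap_mul_self, wH_one]
  by_cases hi : (j : ℕ) = i
  · rw [show j = ⟨i, by omega⟩ from Fin.ext hi, sA, swap_apply_left, hcross]
  by_cases hi' : (j : ℕ) = i + 1
  · rw [show j = ⟨i + 1, h⟩ from Fin.ext hi', sA, swap_apply_right]
    calc s * xH n 0 ⟨i + 1, h⟩ = s * (xH n 0 ⟨i + 1, h⟩ * s) * s := by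
          rw [mul_assoc, mul_assoc, hss, mul_one]
      _ = xH n 0 ⟨i, by omega⟩ * s := by rw [hcross, ← mul_assoc, hss, one_mul]
  · rw [sA, swap_apply_of_ne_of_ne (fun hc => hi (by rw [hc])) (fun hc => hi' (by rw [hc])),
      rel_xw n 0 i h j hi hi']

lemma wH_mul_xH (σ : Perm (Fin n)) (j : Fin n) :
    wH n 0 σ * xH n 0 j = xH n 0 (σ j) * wH n 0 σ := by
  cases n with
  | zero => exact j.elim0
  | succ m =>
    have hσ : σ ∈ Submonoid.closure (Set.range fun i : Fin m => swap i.castSucc i.succ) :=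
      (Perm.mclosure_swap_castSucc_succ m).symm ▸ Submonoid.mem_top σ
    induction hσ using Submonoid.closure_induction generalizing j with
    | mem _ hs =>
      obtain ⟨i, rfl⟩ := hs
      exact wH_sA_mul_xH i (by omega) j
    | one => simp [wH_one]
    | mul σ τ _ _ hσ hτ =>
      rw [← rel_ww, mul_assoc, hτ, ← mul_assoc, hσ, mul_assoc, rel_ww, Perm.mul_apply]

lemma wH_mul_evP (σ : Perm (Fin n)) (p : MvPolynomial (Fin n) ℂ) :
    wH n 0 σ * evP n 0 p = evP n 0 (rename σ p) * wH n 0 σ := by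
  rw [evP_eq_evPAlgHom]
  induction p using MvPolynomial.induction_on with
  | C a => simp [Algebra.commutes]
  | add p q hp hq => simp only [map_add, mul_add, add_mul, hp, hq]
  | mul_X p i hp =>
    simp only [map_mul, rename_X, evPAlgHom_X]
    rw [← mul_assoc, hp, mul_assoc, wH_mul_xH, ← mul_assoc]

lemma wH_mul_evP_sub_conj_mem_commSpan (σ w : Perm (Fin n)) (p : MvPolynomial (Fin n) ℂ) :
    wH n 0 w * evP n 0 p - wH n 0 (σ * w * σ⁻¹) * evP n 0 (rename σ p) ∈
      commSpan (HA n 0) := by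
  have hconj : wH n 0 σ * (wH n 0 w * evP n 0 p) * wH n 0 σ⁻¹ =
      wH n 0 (σ * w * σ⁻¹) * evP n 0 (rename σ p) := by
    have hinv := wH_mul_evP σ⁻¹ (rename σ p)
    rw [rename_rename, Perm.coe_inv, symm_comp_self, rename_id, AlgHom.id_apply] at hinv
    rw [mul_assoc, mul_assoc, ← hinv, ← rel_ww, ← rel_ww]
    noncomm_ring
  exact hconj ▸ sub_conj_mem_commSpan _ _ _ (wH_inv_mul σ)

end Intertwining

section CycleReduction

variable {n : ℕ}

noncomputable def commKer (w : Perm (Fin n)) : Submodule ℂ (MvPolynomial (Fin n) ℂ) :=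
  (commSpan (HA n 0)).comap (LinearMap.mulLeft ℂ (wH n 0 w) ∘ₗ (evPAlgHom n 0).toLinearMap)

lemma mem_commKer {w : Perm (Fin n)} {p : MvPolynomial (Fin n) ℂ} :
    p ∈ commKer w ↔ wH n 0 w * evP n 0 p ∈ commSpan (HA n 0) := Iff.rfl

/-- `w q x_j = x_{w j} (w q)`, so `w q (x_j - x_{w j})` is the commutator `[x_{w j}, w q]`. -/
lemma mul_X_sub_X_apply_mem_commKer (w : Perm (Fin n)) (q : MvPolynomial (Fin n) ℂ)
    (j : Fin n) : q * (MvPolynomial.X j - MvPolynomial.X (w j)) ∈ commKer w := by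
  have hq : evPAlgHom n 0 q * xH n 0 j = xH n 0 j * evPAlgHom n 0 q := by
    rw [← evPAlgHom_X, evPAlgHom_mul_comm]
  rw [mem_commKer, evP_eq_evPAlgHom, map_mul, map_sub, evPAlgHom_X, evPAlgHom_X]
  convert mul_sub_mul_mem_commSpan (xH n 0 (w j)) (wH n 0 w * evPAlgHom n 0 q) using 1
  rw [mul_sub, mul_sub, hq, ← mul_assoc (wH n 0 w), wH_mul_xH]
  noncomm_ring

noncomputable def cycleIdeal (w : Perm (Fin n)) : Ideal (MvPolynomial (Fin n) ℂ) :=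
  Ideal.span (Set.range fun j => MvPolynomial.X j - MvPolynomial.X (w j))

lemma mem_commKer_of_mem_cycleIdeal {w : Perm (Fin n)} {p : MvPolynomial (Fin n) ℂ}
    (hp : p ∈ cycleIdeal w) : p ∈ commKer w := by
  obtain ⟨c, rfl⟩ := Ideal.mem_span_range_iff_exists_fun.mp hp
  exact Submodule.sum_mem _ fun j _ => mul_X_sub_X_apply_mem_commKer w (c j) j

lemma X_sub_X_mem_cycleIdeal_of_sameCycle {w : Perm (Fin n)} {x y : Fin n}
    (h : w.SameCycle x y) : MvPolynomial.X x - MvPolynomial.X y ∈ cycleIdeal w := by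
  obtain ⟨k, rfl⟩ := h.exists_nat_pow_eq
  clear h
  induction k with
  | zero => simp
  | succ k ih =>
    have hstep : MvPolynomial.X ((w ^ k) x) - MvPolynomial.X (w ((w ^ k) x)) ∈ cycleIdeal w :=
      Ideal.subset_span ⟨_, rfl⟩
    simpa [pow_succ'] using add_mem ih hstep

end CycleReduction

section CycleSets

variable {n : ℕ} (w : Perm (Fin n))

def cycleSet (x : Fin n) : Finset (Fin n) := univ.filter (w.SameCycle x)

variable {w}

@[simp]
lemma mem_cycleSet {x y : Fin n} : y ∈ cycleSet w x ↔ w.SameCycle x y := by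
  simp [cycleSet]

lemma cycleSet_eq_of_sameCycle {x y : Fin n} (h : w.SameCycle x y) :
    cycleSet w x = cycleSet w y := by
  ext z
  simp only [mem_cycleSet]
  exact ⟨h.symm.trans, h.trans⟩

lemma cycleSet_eq_of_sameCycle_iff {v : Perm (Fin n)}
    (h : ∀ x y, v.SameCycle x y ↔ w.SameCycle x y) (x : Fin n) :
    cycleSet v x = cycleSet w x := by
  ext y
  simp [h]

lemma image_cycleSet {σ : Perm (Fin n)}
    (hσ : ∀ x y, w.SameCycle (σ x) (σ y) ↔ w.SameCycle x y) (x : Fin n) :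
    (cycleSet w x).image σ = cycleSet w (σ x) := by
  ext y
  obtain ⟨y, rfl⟩ := σ.surjective y
  simp [hσ]

lemma isCycleOn_cycleSet (x : Fin n) : w.IsCycleOn (cycleSet w x) := by
  refine ⟨⟨fun y hy => ?_, w.injective.injOn, fun y hy => ⟨w⁻¹ y, ?_, by simp⟩⟩, ?_⟩
  · simpa [Perm.sameCycle_apply_right] using hy
  · simpa [Perm.sameCycle_symm_apply_right] using hy
  · intro a ha b hb
    exact (mem_cycleSet.mp ha).symm.trans (mem_cycleSet.mp hb)

variable (w) in
noncomputable def cycleMin (x : Fin n) : Fin n :=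
  (cycleSet w x).min' ⟨x, mem_cycleSet.mpr (Perm.SameCycle.refl w x)⟩

lemma sameCycle_cycleMin (x : Fin n) : w.SameCycle x (cycleMin w x) :=
  mem_cycleSet.mp (Finset.min'_mem _ _)

lemma cycleMin_eq_cycleMin_iff {x y : Fin n} : cycleMin w x = cycleMin w y ↔ w.SameCycle x y := by
  refine ⟨fun h => (sameCycle_cycleMin x).trans (h ▸ (sameCycle_cycleMin y).symm),
    fun h => ?_⟩
  simp only [cycleMin, cycleSet_eq_of_sameCycle h]

variable (w) in
/-- For `w ∈ W_J` this says that the cycles of `w` are exactly the `W_J`-orbits, i.e. that `w`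
is elliptic in `W_J`. -/
def OrbitsInCycles (W : Subgroup (Perm (Fin n))) : Prop :=
  ∀ v ∈ W, ∀ x, w.SameCycle x (v x)

end CycleSets

section CycleSquareSums

variable {n : ℕ} {w : Perm (Fin n)}

variable (w) in
noncomputable def cycleSqSum (x : Fin n) : MvPolynomial (Fin n) ℂ :=
  ∑ y ∈ cycleSet w x, MvPolynomial.X y ^ 2

variable (w) in
noncomputable def cycleSqSumAlg : Subalgebra ℂ (MvPolynomial (Fin n) ℂ) :=
  Algebra.adjoin ℂ (Set.range (cycleSqSum w))

lemma rename_cycleSqSum {σ : Perm (Fin n)}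
    (hσ : ∀ x y, w.SameCycle (σ x) (σ y) ↔ w.SameCycle x y) (x : Fin n) :
    rename σ (cycleSqSum w x) = cycleSqSum w (σ x) := by
  simp only [cycleSqSum, map_sum, map_pow, rename_X]
  rw [← image_cycleSet hσ, Finset.sum_image fun a _ b _ h => σ.injective h]

lemma rename_mem_cycleSqSumAlg {σ : Perm (Fin n)}
    (hσ : ∀ x y, w.SameCycle (σ x) (σ y) ↔ w.SameCycle x y) {p : MvPolynomial (Fin n) ℂ}
    (hp : p ∈ cycleSqSumAlg w) : rename σ p ∈ cycleSqSumAlg w := by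
  have hle : (cycleSqSumAlg w).map (rename σ) ≤ cycleSqSumAlg w := by
    rw [cycleSqSumAlg, AlgHom.map_adjoin]
    refine Algebra.adjoin_mono ?_
    rintro _ ⟨_, ⟨x, rfl⟩, rfl⟩
    exact ⟨σ x, (rename_cycleSqSum hσ x).symm⟩
  exact hle ⟨p, hp, rfl⟩

lemma rename_eq_self_of_mem_cycleSqSumAlg {τ : Perm (Fin n)} (hτ : ∀ x, w.SameCycle x (τ x))
    {p : MvPolynomial (Fin n) ℂ} (hp : p ∈ cycleSqSumAlg w) : rename τ p = p := by
  have hτ' : ∀ x y, w.SameCycle (τ x) (τ y) ↔ w.SameCycle x y := fun x y =>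
    ⟨fun h => (hτ x).trans (h.trans (hτ y).symm),
      fun h => (hτ x).symm.trans (h.trans (hτ y))⟩
  refine (AlgHom.eqOn_adjoin_iff (φ := rename τ) (ψ := AlgHom.id ℂ _)).mpr ?_ hp
  rintro _ ⟨x, rfl⟩
  rw [rename_cycleSqSum hτ', AlgHom.id_apply, cycleSqSum, cycleSqSum,
    cycleSet_eq_of_sameCycle (hτ x)]

variable (w) in
lemma X_sq_sub_smul_cycleSqSum_mem_cycleIdeal (x : Fin n) :
    MvPolynomial.X x ^ 2 - (#(cycleSet w x) : ℂ)⁻¹ • cycleSqSum w x ∈ cycleIdeal w := by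
  have hc : (#(cycleSet w x) : ℂ) ≠ 0 :=
    Nat.cast_ne_zero.mpr (card_ne_zero_of_mem (mem_cycleSet.mpr (Perm.SameCycle.refl w x)))
  have hsum :
      ∑ y ∈ cycleSet w x, (MvPolynomial.X x ^ 2 - MvPolynomial.X y ^ 2) ∈ cycleIdeal w :=
    Ideal.sum_mem _ fun y hy => by
      rw [sq_sub_sq]
      exact Ideal.mul_mem_left _ _ (X_sub_X_mem_cycleIdeal_of_sameCycle (mem_cycleSet.mp hy))
  have heq : MvPolynomial.X x ^ 2 - (#(cycleSet w x) : ℂ)⁻¹ • cycleSqSum w x =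
      (#(cycleSet w x) : ℂ)⁻¹ •
        ∑ y ∈ cycleSet w x, (MvPolynomial.X x ^ 2 - MvPolynomial.X y ^ 2) := by
    rw [sum_sub_distrib, sum_const, ← Nat.cast_smul_eq_nsmul ℂ, smul_sub, smul_smul,
      inv_mul_cancel₀ hc, one_smul, cycleSqSum]
  rw [heq, MvPolynomial.smul_eq_C_mul]
  exact Ideal.mul_mem_left _ _ hsum

lemma exists_mem_cycleSqSumAlg_sub_mem_cycleIdeal (w : Perm (Fin n))
    {f : MvPolynomial (Fin n) ℂ}
    (hf : f ∈ Algebra.adjoin ℂ (Set.range fun i : Fin n => (MvPolynomial.X i) ^ 2)) :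
    ∃ g ∈ cycleSqSumAlg w, f - g ∈ cycleIdeal w := by
  set π := Ideal.Quotient.mkₐ ℂ (cycleIdeal w)
  have hle : (Algebra.adjoin ℂ (Set.range fun i : Fin n => (MvPolynomial.X i) ^ 2)).map π ≤
      (cycleSqSumAlg w).map π := by
    rw [AlgHom.map_adjoin, Algebra.adjoin_le_iff]
    rintro _ ⟨_, ⟨i, rfl⟩, rfl⟩
    refine Subalgebra.mem_map.mpr
      ⟨_, Subalgebra.smul_mem _ (Algebra.subset_adjoin (Set.mem_range_self i))
        (#(cycleSet w i) : ℂ)⁻¹, ?_⟩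
    simp only [π, Ideal.Quotient.mkₐ_eq_mk]
    exact (Ideal.Quotient.eq.mpr (X_sq_sub_smul_cycleSqSum_mem_cycleIdeal w i)).symm
  obtain ⟨g, hg, hgf⟩ := hle ⟨f, hf, rfl⟩
  simp only [π] at hgf
  exact ⟨g, hg, Ideal.Quotient.eq.mp hgf.symm⟩

lemma cycleSqSumAlg_le_SV2J {J : Set (Perm (Fin n))}
    (hJ : OrbitsInCycles w (Subgroup.closure J)) : cycleSqSumAlg w ≤ SV2J n J := by
  refine Algebra.adjoin_mono ?_
  rintro _ ⟨x, rfl⟩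
  exact ⟨Submodule.sum_mem _ fun y _ => Submodule.subset_span ⟨y, rfl⟩, fun v hv =>
    rename_eq_self_of_mem_cycleSqSumAlg (hJ v hv) (Algebra.subset_adjoin ⟨x, rfl⟩)⟩

end CycleSquareSums

section AdjacentSimples

variable {n : ℕ} {β : Type*}

lemma eq_of_sA_eq {i j : ℕ} {hi : i + 1 < n} {hj : j + 1 < n} (h : sA n i hi = sA n j hj) :
    i = j := by
  have := congrArg (· ⟨i, by omega⟩) h
  simp only [sA, swap_apply_def, Fin.ext_iff] at this
  split_ifs at this <;> simp at * <;> omega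

def adjSimples (g : Fin n → β) : Set (Perm (Fin n)) :=
  {σ | ∃ (i : ℕ) (h : i + 1 < n), g ⟨i, by omega⟩ = g ⟨i + 1, h⟩ ∧ σ = sA n i h}

lemma adjSimples_subset_simplesA (g : Fin n → β) : adjSimples g ⊆ simplesA n := by
  rintro _ ⟨i, h, -, rfl⟩
  exact ⟨i, h, rfl⟩

lemma apply_eq_of_mem_closure_adjSimples {g : Fin n → β} {σ : Perm (Fin n)}
    (hσ : σ ∈ Subgroup.closure (adjSimples g)) (x : Fin n) : g (σ x) = g x := by
  induction hσ using Subgroup.closure_induction generalizing x with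
  | mem _ hs =>
    obtain ⟨i, h, hgi, rfl⟩ := hs
    rw [sA, swap_apply_def]
    split_ifs with h₁ h₂
    · rw [h₁, hgi]
    · rw [h₂, hgi]
    · rfl
  | one => rfl
  | mul σ τ _ _ hσ hτ => rw [Perm.mul_apply, hσ, hτ]
  | inv σ _ hσ => simpa using (hσ (σ⁻¹ x)).symm

lemma mem_orbit_closure_adjSimples [LinearOrder β] {g : Fin n → β} (hg : Monotone g)
    {x y : Fin n} (hxy : g x = g y) :
    y ∈ MulAction.orbit (Subgroup.closure (adjSimples g)) x := by
  wlog hle : x ≤ y generalizing x y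
  · exact MulAction.mem_orbit_symm.mp (this hxy.symm (le_of_not_ge hle))
  obtain ⟨y, hy⟩ := y
  obtain ⟨k, rfl⟩ := Nat.exists_eq_add_of_le (Fin.le_def.mp hle)
  induction k with
  | zero => exact MulAction.mem_orbit_self x
  | succ k ih =>
    rw [MulAction.mem_orbit_iff]
    have hk : (x : ℕ) + k + 1 < n := by omega
    have hgk : g ⟨x + k, by omega⟩ = g ⟨x + k + 1, hk⟩ :=
      le_antisymm (hg (Fin.le_def.mpr (by simp))) (hxy ▸ hg (Fin.le_def.mpr (by simp)))
    obtain ⟨a, ha⟩ := MulAction.mem_orbit_iff.mp <|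
      ih (by omega) (hxy.trans hgk.symm) (Fin.le_def.mpr (by simp))
    have hs : sA n (x + k) hk ∈ Subgroup.closure (adjSimples g) :=
      Subgroup.subset_closure ⟨x + k, hk, hgk, rfl⟩
    refine ⟨⟨sA n (x + k) hk, hs⟩ * a, ?_⟩
    rw [mul_smul, ha, Subgroup.mk_smul, Perm.smul_def]
    exact swap_apply_left _ _

lemma mem_closure_adjSimples [LinearOrder β] {g : Fin n → β} (hg : Monotone g)
    {σ : Perm (Fin n)} (hσ : ∀ x, g (σ x) = g x) : σ ∈ Subgroup.closure (adjSimples g) := by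
  refine (mem_closure_isSwap ?_).mpr ⟨Set.toFinite _, fun x => ?_⟩
  · rintro _ ⟨i, h, -, rfl⟩
    exact ⟨_, _, fun he => by simpa using congrArg Fin.val he, rfl⟩
  · exact mem_orbit_closure_adjSimples hg (hσ x).symm

lemma card_filter_apply_eq_apply_succ_add_card_image [LinearOrder β] {g : ℕ → β}
    (hg : Monotone g) (m : ℕ) :
    #((range m).filter fun i => g i = g (i + 1)) + #((range (m + 1)).image g) = m + 1 := by
  induction m with
  | zero => simp
  | succ m ih =>
    rw [range_add_one (n := m), filter_insert, range_add_one (n := m + 1), image_insert]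
    by_cases hm : g m = g (m + 1)
    · rw [if_pos hm, card_insert_of_notMem (by simp),
        insert_eq_of_mem (mem_image.mpr ⟨m, by simp, hm⟩)]
      omega
    · have hlt : ∀ i ∈ range (m + 1), g i < g (m + 1) := fun i hi =>
        (hg (by simpa [Nat.lt_succ_iff] using hi)).trans_lt ((hg (by omega)).lt_of_ne hm)
      rw [if_neg hm, card_insert_of_notMem fun h => by
        obtain ⟨i, hi, he⟩ := mem_image.mp h
        exact (hlt i hi).ne he]
      omega

lemma ncard_adjSimples_add_card_image [LinearOrder β] {g : Fin n → β} (hg : Monotone g) :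
    (adjSimples g).ncard + #(univ.image g) = n := by
  cases n with
  | zero => simp [adjSimples]
  | succ m =>
    set gN : ℕ → β := fun i => g ⟨min i m, by omega⟩
    have hgN : Monotone gN := fun a b hab => hg (Fin.le_def.mpr (by simp; omega))
    have hadj : adjSimples g =
        (fun i => if h : i + 1 < m + 1 then sA (m + 1) i h else 1) ''
          ↑((range m).filter fun i => gN i = gN (i + 1)) := by
      ext σ
      simp only [adjSimples, gN, Set.mem_image, coe_filter, mem_range]
      constructor
      · rintro ⟨i, h, hgi, rfl⟩
        refine ⟨i, ⟨by omega, ?_⟩, by simp [h]⟩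
        simpa [show min i m = i by omega, show min (i + 1) m = i + 1 by omega] using hgi
      · rintro ⟨i, ⟨hi, hgi⟩, rfl⟩
        refine ⟨i, by omega, ?_, by simp [show i + 1 < m + 1 by omega]⟩
        simpa [show min i m = i by omega, show min (i + 1) m = i + 1 by omega] using hgi
    have himage : (range (m + 1)).image gN = univ.image g := by
      ext v
      simp only [mem_image, mem_range, mem_univ, true_and, gN]
      exact ⟨fun ⟨i, hi, he⟩ => ⟨_, he⟩, fun ⟨x, hx⟩ =>
        ⟨x, x.isLt, hx ▸ congrArg g (Fin.ext (Nat.min_eq_left (by omega)))⟩⟩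
    rw [hadj, Set.InjOn.ncard_image, Set.ncard_coe_finset, ← himage]
    · exact card_filter_apply_eq_apply_succ_add_card_image hgN m
    · intro i hi j hj he
      rw [mem_coe, mem_filter, mem_range] at hi hj
      simp only [show i + 1 < m + 1 by omega, show j + 1 < m + 1 by omega, dif_pos] at he
      exact eq_of_sA_eq he

end AdjacentSimples

section Minimality

variable {n : ℕ}

open Classical in
/-- On `Fin n` this numbers the orbits of `W_J`, which are intervals, from left to right. -/
noncomputable def blockIndex (J : Set (Perm (Fin n))) (x : ℕ) : ℕ :=
  #((range x).filter fun i => ∀ h : i + 1 < n, sA n i h ∉ J)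

lemma blockIndex_mono (J : Set (Perm (Fin n))) : Monotone (blockIndex J) := fun _ _ hxy => by
  classical
  exact card_le_card (filter_subset_filter _ (range_subset_range.mpr hxy))

lemma blockIndex_succ_eq_iff {J : Set (Perm (Fin n))} {i : ℕ} (h : i + 1 < n) :
    blockIndex J (i + 1) = blockIndex J i ↔ sA n i h ∈ J := by
  classical
  simp only [blockIndex, range_add_one, filter_insert]
  split_ifs with hi
  · simpa [card_insert_of_notMem] using hi h
  · simp only [not_forall, not_not] at hi
    simpa using hi.2

lemma adjSimples_blockIndex {J : Set (Perm (Fin n))} (hJ : J ⊆ simplesA n) :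
    adjSimples (fun x : Fin n => blockIndex J x) = J := by
  ext σ
  constructor
  · rintro ⟨i, h, hi, rfl⟩
    exact (blockIndex_succ_eq_iff h).mp hi.symm
  · intro hσ
    obtain ⟨i, h, rfl⟩ := hJ hσ
    exact ⟨i, h, ((blockIndex_succ_eq_iff h).mpr hσ).symm, rfl⟩

/-- Sorting the points by the least element of their `w`-cycle makes the cycles consecutive
intervals. -/
lemma exists_isConj_mem_closure (w : Perm (Fin n)) :
    ∃ J' ⊆ simplesA n, ∃ w', IsConj w w' ∧ w' ∈ Subgroup.closure J' ∧
      J'.ncard + #(univ.image (cycleMin w)) = n := by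
  set ρ := Tuple.sort (cycleMin w)
  have hg : Monotone (cycleMin w ∘ ρ) := Tuple.monotone_sort _
  refine ⟨adjSimples (cycleMin w ∘ ρ), adjSimples_subset_simplesA _, ρ⁻¹ * w * ρ,
    isConj_iff.mpr ⟨ρ⁻¹, by rw [inv_inv]⟩, mem_closure_adjSimples hg fun x => ?_, ?_⟩
  · simp only [Function.comp_apply, Perm.mul_apply, Perm.coe_inv, apply_symm_apply]
    exact cycleMin_eq_cycleMin_iff.mpr (Perm.sameCycle_apply_left.mpr (Perm.SameCycle.refl w _))
  · have hcard := ncard_adjSimples_add_card_image hg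
    rwa [← image_image, image_univ_equiv] at hcard

/-- `W_J` has `n - |J|` orbits and `w_C` has at least as many cycles, each inside an orbit;
minimality of `J` and the previous lemma give the reverse inequality. -/
lemma orbitsInCycles_of_minimal {C J : Set (Perm (Fin n))} (hC : ∃ w0, C = {σ | IsConj w0 σ})
    (hJ : J ⊆ simplesA n)
    (hmin : ∀ J' ⊆ simplesA n,
      (C ∩ (Subgroup.closure J' : Set (Perm (Fin n)))).Nonempty → J.ncard ≤ J'.ncard)
    {wC : Perm (Fin n)} (hwC : wC ∈ C ∩ (Subgroup.closure J : Set (Perm (Fin n)))) :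
    OrbitsInCycles wC (Subgroup.closure J) := by
  obtain ⟨J', hJ', w', hconj, hw', hcard'⟩ := exists_isConj_mem_closure wC
  have hw'C : w' ∈ C := by
    obtain ⟨w0, rfl⟩ := hC
    exact IsConj.trans hwC.1 hconj
  have hle := hmin J' hJ' ⟨w', hw'C, hw'⟩
  set b : Fin n → ℕ := fun x => blockIndex J x
  have hcard := ncard_adjSimples_add_card_image (g := b) fun x y hxy => blockIndex_mono J hxy
  rw [adjSimples_blockIndex hJ] at hcard
  have hb : ∀ v ∈ Subgroup.closure J, ∀ x, b (v x) = b x := fun v hv =>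
    apply_eq_of_mem_closure_adjSimples ((adjSimples_blockIndex hJ).symm ▸ hv)
  have hbmin : ∀ x, b (cycleMin wC x) = b x := fun x => by
    obtain ⟨k, hk⟩ := (sameCycle_cycleMin (w := wC) x).exists_nat_pow_eq
    rw [← hk, hb _ (pow_mem hwC.2 k)]
  have himage : univ.image b = (univ.image (cycleMin wC)).image b := by
    rw [image_image]
    exact image_congr fun x _ => (hbmin x).symm
  have hinj : Set.InjOn b (univ.image (cycleMin wC)) := by
    refine card_image_iff.mp (le_antisymm card_image_le ?_)
    rw [← himage]
    omega
  intro v hv x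
  refine cycleMin_eq_cycleMin_iff.mp (hinj ?_ ?_ ?_).symm
  · exact mem_image_of_mem _ (mem_univ _)
  · exact mem_image_of_mem _ (mem_univ _)
  · simp only [hbmin, hb v hv]

end Minimality

section Conjugator

variable {n : ℕ} {v w : Perm (Fin n)}

lemma pow_apply_eq_pow_apply_iff_of_sameCycle_iff (h : ∀ x y, v.SameCycle x y ↔ w.SameCycle x y)
    (x : Fin n) {a b : ℕ} : (v ^ a) x = (v ^ b) x ↔ (w ^ a) x = (w ^ b) x := by
  have hx {u : Perm (Fin n)} : x ∈ cycleSet u x := mem_cycleSet.mpr (Perm.SameCycle.refl u x)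
  rw [(isCycleOn_cycleSet x).pow_apply_eq_pow_apply hx,
    (isCycleOn_cycleSet x).pow_apply_eq_pow_apply hx, cycleSet_eq_of_sameCycle_iff h]

/-- The conjugator sends `v^k m` to `w^k m`, where `m` is the least element of the cycle. -/
lemma exists_conj_eq_of_sameCycle_iff (h : ∀ x y, v.SameCycle x y ↔ w.SameCycle x y) :
    ∃ τ : Perm (Fin n), τ * v * τ⁻¹ = w ∧ ∀ x, w.SameCycle x (τ x) := by
  choose k hk using fun x =>
    ((h _ _).mpr (sameCycle_cycleMin (w := w) x).symm).exists_nat_pow_eq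
  set τ : Fin n → Fin n := fun x => (w ^ k x) (cycleMin w x)
  have hτ (x : Fin n) : w.SameCycle x (τ x) :=
    (sameCycle_cycleMin x).trans (Perm.sameCycle_pow_right.mpr (Perm.SameCycle.refl w _))
  have hcomm (x : Fin n) : τ (v x) = w (τ x) := by
    have hmin : cycleMin w (v x) = cycleMin w x := cycleMin_eq_cycleMin_iff.mpr
      ((h _ _).mp (Perm.sameCycle_apply_left.mpr (Perm.SameCycle.refl v x)))
    have hv : (v ^ k (v x)) (cycleMin w x) = (v ^ (k x + 1)) (cycleMin w x) := by
      rw [pow_succ', Perm.mul_apply, hk x, ← hmin, hk (v x)]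
    simp only [τ, hmin, (pow_apply_eq_pow_apply_iff_of_sameCycle_iff h _).mp hv, pow_succ',
      Perm.mul_apply]
  have hinj : Function.Injective τ := fun x y hxy => by
    have hmin : cycleMin w y = cycleMin w x :=
      cycleMin_eq_cycleMin_iff.mpr ((hτ y).trans (hxy ▸ (hτ x).symm))
    have hw : (w ^ k x) (cycleMin w x) = (w ^ k y) (cycleMin w x) := by
      simpa only [τ, hmin] using hxy
    rw [← hk x, ← hk y, hmin, (pow_apply_eq_pow_apply_iff_of_sameCycle_iff h _).mpr hw]
  refine ⟨Equiv.ofBijective τ (Finite.injective_iff_bijective.mp hinj), ?_, hτ⟩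
  rw [mul_inv_eq_iff_eq_mul]
  ext x
  exact congrArg Fin.val (hcomm x)

end Conjugator

section Normalizer

variable {n : ℕ} {W : Subgroup (Perm (Fin n))} {w : Perm (Fin n)}

lemma OrbitsInCycles.sameCycle (hW : OrbitsInCycles w W) {v : Perm (Fin n)} (hv : v ∈ W)
    {x y : Fin n} (hxy : v.SameCycle x y) : w.SameCycle x y := by
  obtain ⟨k, rfl⟩ := hxy
  exact hW _ (zpow_mem hv k) x

lemma OrbitsInCycles.sameCycle_conj_iff (hW : OrbitsInCycles w W) (hw : w ∈ W)
    {σ : Perm (Fin n)} (hσ : σ ∈ Subgroup.normalizer (W : Set (Perm (Fin n)))) {x y : Fin n} :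
    (σ * w * σ⁻¹).SameCycle x y ↔ w.SameCycle x y := by
  refine ⟨hW.sameCycle ((Subgroup.mem_normalizer_iff.mp hσ w).mp hw), fun hxy => ?_⟩
  have hw' : σ⁻¹ * w * σ⁻¹⁻¹ ∈ W :=
    (Subgroup.mem_normalizer_iff.mp (inv_mem hσ) w).mp hw
  rw [Perm.sameCycle_conj]
  exact hW.sameCycle hw' (Perm.sameCycle_conj.mpr (by simpa using hxy))

lemma OrbitsInCycles.sameCycle_apply_apply_iff (hW : OrbitsInCycles w W) (hw : w ∈ W)
    {σ : Perm (Fin n)} (hσ : σ ∈ Subgroup.normalizer (W : Set (Perm (Fin n)))) (x y : Fin n) :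
    w.SameCycle (σ x) (σ y) ↔ w.SameCycle x y := by
  rw [← hW.sameCycle_conj_iff hw hσ, Perm.sameCycle_conj]
  simp

/-- Conjugating `w p` by `σ` and then by a cycle-preserving `τ` with
`τ (σ w σ⁻¹) τ⁻¹ = w` turns it into `w (σ p)`. -/
lemma OrbitsInCycles.sub_rename_mem_commKer (hW : OrbitsInCycles w W) (hw : w ∈ W)
    {σ : Perm (Fin n)} (hσ : σ ∈ Subgroup.normalizer (W : Set (Perm (Fin n))))
    {p : MvPolynomial (Fin n) ℂ} (hp : p ∈ cycleSqSumAlg w) :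
    p - rename σ p ∈ commKer w := by
  obtain ⟨τ, hτ, hτw⟩ := exists_conj_eq_of_sameCycle_iff fun x y =>
    hW.sameCycle_conj_iff hw hσ (x := x) (y := y)
  have hσp := rename_mem_cycleSqSumAlg (hW.sameCycle_apply_apply_iff hw hσ) hp
  have h₁ := wH_mul_evP_sub_conj_mem_commSpan σ w p
  have h₂ := wH_mul_evP_sub_conj_mem_commSpan τ (σ * w * σ⁻¹) (rename σ p)
  rw [hτ, rename_eq_self_of_mem_cycleSqSumAlg hτw hσp] at h₂
  rw [mem_commKer, evP_eq_evPAlgHom, map_sub, mul_sub, ← evP_eq_evPAlgHom]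
  simpa using add_mem h₁ h₂

end Normalizer

section Average

variable {ι R : Type*} [Field R] (G : Subgroup (Perm ι)) [Fintype G]

noncomputable def renameAvg (p : MvPolynomial ι R) : MvPolynomial ι R :=
  (Fintype.card G : R)⁻¹ • ∑ σ : G, rename (σ : Perm ι) p

lemma rename_renameAvg {σ : Perm ι} (hσ : σ ∈ G) (p : MvPolynomial ι R) :
    rename σ (renameAvg G p) = renameAvg G p := by
  simp only [renameAvg, map_smul, map_sum, rename_rename]
  congr 1
  exact Fintype.sum_equiv (Equiv.mulLeft ⟨σ, hσ⟩) _ _ fun τ => by simp [Perm.coe_mul]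

lemma renameAvg_mem {S : Submodule R (MvPolynomial ι R)} {p : MvPolynomial ι R}
    (h : ∀ σ ∈ G, rename σ p ∈ S) : renameAvg G p ∈ S :=
  S.smul_mem _ (S.sum_mem fun σ _ => h σ σ.2)

lemma sub_renameAvg [CharZero R] (p : MvPolynomial ι R) :
    p - renameAvg G p =
      (Fintype.card G : R)⁻¹ • ∑ σ : G, (p - rename (σ : Perm ι) p) := by
  have hG : (Fintype.card G : R) ≠ 0 := Nat.cast_ne_zero.mpr Fintype.card_ne_zero
  rw [sum_sub_distrib, sum_const, card_univ, ← Nat.cast_smul_eq_nsmul R, smul_sub, smul_smul,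
    inv_mul_cancel₀ hG, one_smul, renameAvg]

end Average

theorem elliptic_reduction_graded_typeA_general (n : ℕ)
    (C : Set (Equiv.Perm (Fin n))) (hC : ∃ w0, C = {σ | IsConj w0 σ})
    (J : Set (Equiv.Perm (Fin n))) (hJ : J ⊆ simplesA n)
    (hmin : ∀ J' ⊆ simplesA n,
      (C ∩ (Subgroup.closure J' : Set (Equiv.Perm (Fin n)))).Nonempty →
        J.ncard ≤ J'.ncard)
    (wC : Equiv.Perm (Fin n))
    (hwC : wC ∈ C ∩ (Subgroup.closure J : Set (Equiv.Perm (Fin n))))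
    (f : MvPolynomial (Fin n) ℂ)
    (hf : f ∈ Algebra.adjoin ℂ (Set.range fun i : Fin n => (MvPolynomial.X i) ^ 2)) :
    ∃ g ∈ SInvJ n J,
      wH n 0 wC * evP n 0 f - wH n 0 wC * evP n 0 g ∈ commSpan (HA n 0) := by
  have hcyc := orbitsInCycles_of_minimal hC hJ hmin hwC
  set N := Subgroup.normalizer (Subgroup.closure J : Set (Perm (Fin n)))
  have : Fintype N := Fintype.ofFinite N
  obtain ⟨g₀, hg₀, hfg₀⟩ := exists_mem_cycleSqSumAlg_sub_mem_cycleIdeal wC hf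
  refine ⟨renameAvg N g₀,
    ⟨cycleSqSumAlg_le_SV2J hcyc ?_, fun σ hσ => rename_renameAvg N hσ g₀⟩, ?_⟩
  · exact renameAvg_mem N (S := Subalgebra.toSubmodule (cycleSqSumAlg wC)) fun σ hσ =>
      rename_mem_cycleSqSumAlg (hcyc.sameCycle_apply_apply_iff hwC.2 hσ) hg₀
  have hK : f - renameAvg N g₀ ∈ commKer wC := by
    rw [← sub_add_sub_cancel f g₀, sub_renameAvg]
    exact add_mem (mem_commKer_of_mem_cycleIdeal hfg₀) (Submodule.smul_mem _ _
      (Submodule.sum_mem _ fun σ _ => hcyc.sub_rename_mem_commKer hwC.2 σ.2 hg₀))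
  rwa [mem_commKer, evP_eq_evPAlgHom, map_sub, mul_sub] at hK

/-- In the degenerate affine Hecke-Clifford algebra of type `A_{n-1}`
with parameter `u = 0`: for a conjugacy class `C` of `S_n`, a subset `J` of the simple
transpositions of minimal cardinality meeting `C`, and `w_C ∈ C ∩ W_J`, every element
`w_C f` with `f ∈ ℂ[x_1², …, x_n²]` is congruent modulo commutators to `w_C g` for some
`g ∈ S((V²)^{W_J})^{N_{S_n}(W_J)}`. -/
theorem elliptic_reduction_graded_typeA (n : ℕ) (hn : 2 ≤ n)
    (C : Set (Equiv.Perm (Fin n))) (hC : ∃ w0, C = {σ | IsConj w0 σ})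
    (J : Set (Equiv.Perm (Fin n))) (hJ : J ⊆ simplesA n)
    (hmeet : (C ∩ (Subgroup.closure J : Set (Equiv.Perm (Fin n)))).Nonempty)
    (hmin : ∀ J' ⊆ simplesA n,
      (C ∩ (Subgroup.closure J' : Set (Equiv.Perm (Fin n)))).Nonempty →
        J.ncard ≤ J'.ncard)
    (wC : Equiv.Perm (Fin n))
    (hwC : wC ∈ C ∩ (Subgroup.closure J : Set (Equiv.Perm (Fin n))))
    (f : MvPolynomial (Fin n) ℂ)
    (hf : f ∈ Algebra.adjoin ℂ (Set.range fun i : Fin n => (MvPolynomial.X i) ^ 2)) :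
    ∃ g ∈ SInvJ n J,
      wH n 0 wC * evP n 0 f - wH n 0 wC * evP n 0 g ∈ commSpan (HA n 0) :=
  elliptic_reduction_graded_typeA_general n C hC J hJ hmin wC hwC f hf

end DAHCA
end
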